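/- Let H₁ and H₂ be real Hilbert spaces and K : H₁ → H₂ a bounded linear operator with adjoint K* and operator norm ‖K‖. Let τ, σ > 0 satisfy τσ‖K‖² < 1. Let A₁ be a maximally monotone set-valued operator on H₁ with J₁ the resolvent of τA₁, and A₂ a maximally monotone set-valued operator on H₂ with J₂ the resolvent of σA₂, and suppose there exists (u, v) ∈ H₁ × H₂ with −K*v ∈ A₁(u) and Ku ∈ A₂(v). Let u_0, u_{-1} ∈ H₁, v_0 ∈ H₂ and define, for k ≥ 0: u_{k+1} = J₁(u_k − τK*v_k) and v_{k+1} = J₂(v_k + σK u_{k+1}) + σ(K u_{k+1} − K u_k). Then the sequences (u_k) and (v_k) are bounded, i.e. there exists M > 0 with ‖u_k‖ ≤ M and ‖v_k‖ ≤ M for all k. -/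

import Mathlib

/-!
The iterates are bounded because the energy
`E(x, y) = σ‖x‖² + τ‖y - σKx‖²`, evaluated at the distance `(u_k - u, v_k - v)` to a saddle
point, is nonincreasing along the algorithm. Monotonicity of `τA₁` and `σA₂`, tested against
the saddle point, bounds `E_k - E_{k+1}` from below by
`σ‖d‖² + τ‖e‖² + 2τσ⟪e, Kd⟫ = τ‖e + σKd‖² + σ(‖d‖² - τσ‖Kd‖²)` for suitable increments
`d, e`, which is nonnegative as soon as `τσ‖K‖² ≤ 1`. The sublevel sets of `E` are bounded.
-/

open scoped RealInnerProductSpace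

/-- A set-valued operator `A ⊆ H × H` is monotone. -/
def IsMonotoneOp {H : Type*} [NormedAddCommGroup H] [InnerProductSpace ℝ H]
    (A : Set (H × H)) : Prop :=
  ∀ p ∈ A, ∀ q ∈ A, (0 : ℝ) ≤ ⟪p.2 - q.2, p.1 - q.1⟫

/-- Maximal monotonicity. -/
def IsMaximalMonotoneOp {H : Type*} [NormedAddCommGroup H] [InnerProductSpace ℝ H]
    (A : Set (H × H)) : Prop :=
  IsMonotoneOp A ∧
    ∀ p : H × H, (∀ q ∈ A, (0 : ℝ) ≤ ⟪p.2 - q.2, p.1 - q.1⟫) → p ∈ A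

/-- The scaled operator `cA = {(x, c•u) : (x,u) ∈ A}`. -/
def smulOp {H : Type*} [NormedAddCommGroup H] [InnerProductSpace ℝ H]
    (c : ℝ) (A : Set (H × H)) : Set (H × H) :=
  (fun p : H × H => (p.1, c • p.2)) '' A

section MonotoneOp

variable {H : Type*} [NormedAddCommGroup H] [InnerProductSpace ℝ H] {A : Set (H × H)}

lemma mk_mem_smulOp {x y : H} (h : (x, y) ∈ A) (c : ℝ) : (x, c • y) ∈ smulOp c A :=
  ⟨(x, y), h, rfl⟩

lemma IsMonotoneOp.smulOp (hA : IsMonotoneOp A) {c : ℝ} (hc : 0 ≤ c) :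
    IsMonotoneOp (smulOp c A) := by
  rintro _ ⟨p, hp, rfl⟩ _ ⟨q, hq, rfl⟩
  simpa only [← smul_sub, real_inner_smul_left] using mul_nonneg hc (hA p hp q hq)

end MonotoneOp

section PrimalDual

variable {H₁ H₂ : Type*} [NormedAddCommGroup H₁] [InnerProductSpace ℝ H₁]
  [NormedAddCommGroup H₂] [InnerProductSpace ℝ H₂] (K : H₁ →L[ℝ] H₂) {τ σ : ℝ}

def primalDualEnergy (τ σ : ℝ) (x : H₁) (y : H₂) : ℝ :=
  σ * ‖x‖ ^ 2 + τ * ‖y - σ • K x‖ ^ 2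

lemma exists_norm_le_of_primalDualEnergy_le (hτ : 0 < τ) (hσ : 0 < σ) (C : ℝ) :
    ∃ R : ℝ, ∀ x y, primalDualEnergy K τ σ x y ≤ C → ‖x‖ ≤ R ∧ ‖y‖ ≤ R := by
  refine ⟨√(C / σ) + √(C / τ) + σ * ‖K‖ * √(C / σ), fun x y hE => ?_⟩
  rw [primalDualEnergy] at hE
  have hx : ‖x‖ ≤ √(C / σ) := by
    rw [← abs_norm]
    refine Real.abs_le_sqrt ((le_div_iff₀ hσ).2 ?_)
    linarith [mul_nonneg hτ.le (sq_nonneg ‖y - σ • K x‖)]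
  have hy : ‖y - σ • K x‖ ≤ √(C / τ) := by
    rw [← abs_norm]
    refine Real.abs_le_sqrt ((le_div_iff₀ hτ).2 ?_)
    linarith [mul_nonneg hσ.le (sq_nonneg ‖x‖)]
  have hKx : ‖σ • K x‖ ≤ σ * ‖K‖ * √(C / σ) := by
    rw [norm_smul, Real.norm_eq_abs, abs_of_pos hσ, mul_assoc]
    exact mul_le_mul_of_nonneg_left (K.le_opNorm_of_le hx) hσ.le
  have hy' := (norm_le_norm_add_norm_sub' y (σ • K x)).trans (add_le_add hKx hy)
  constructor <;> linarith [Real.sqrt_nonneg (C / σ), Real.sqrt_nonneg (C / τ),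
    (norm_nonneg (σ • K x)).trans hKx]

lemma norm_sq_add_inner_apply_nonneg (hτ : 0 ≤ τ) (hσ : 0 ≤ σ) (hK : τ * σ * ‖K‖ ^ 2 ≤ 1)
    (d : H₁) (e : H₂) : 0 ≤ σ * ‖d‖ ^ 2 + τ * ‖e‖ ^ 2 + 2 * τ * σ * ⟪e, K d⟫ := by
  have hKd : ‖K d‖ ^ 2 ≤ ‖K‖ ^ 2 * ‖d‖ ^ 2 := by
    rw [← mul_pow]
    exact pow_le_pow_left₀ (norm_nonneg _) (K.le_opNorm d) 2
  have hsq : 0 ≤ τ * ‖e + σ • K d‖ ^ 2 := by positivity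
  rw [norm_add_sq_real, norm_smul, real_inner_smul_right, Real.norm_eq_abs,
    abs_of_nonneg hσ] at hsq
  have hσd : 0 ≤ σ * ‖d‖ ^ 2 := by positivity
  linarith [mul_le_mul_of_nonneg_left hKd (mul_nonneg (mul_nonneg hτ hσ) hσ),
    mul_le_mul_of_nonneg_left hK hσd]

variable [CompleteSpace H₁] [CompleteSpace H₂]

lemma primalDualEnergy_le_of_inner_nonneg (hτ : 0 ≤ τ) (hσ : 0 ≤ σ)
    (hK : τ * σ * ‖K‖ ^ 2 ≤ 1) {a a' : H₁} {b q : H₂}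
    (h₁ : 0 ≤ ⟪a - a' - τ • ContinuousLinearMap.adjoint K b, a'⟫)
    (h₂ : 0 ≤ ⟪b - q + σ • K a', q⟫) :
    primalDualEnergy K τ σ a' (q + σ • K (a' - a)) ≤ primalDualEnergy K τ σ a b := by
  have hgap := norm_sq_add_inner_apply_nonneg K hτ hσ hK (a' - a) (b - q)
  have hq : q + σ • K (a' - a) - σ • K a' = q - σ • K a := by
    rw [map_sub, smul_sub]
    abel
  rw [primalDualEnergy, primalDualEnergy, hq]
  rw [inner_sub_left, inner_sub_left, real_inner_smul_left,
    ContinuousLinearMap.adjoint_inner_left] at h₁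
  rw [inner_add_left, inner_sub_left, real_inner_smul_left, real_inner_comm _ (K a')] at h₂
  simp only [norm_sub_sq_real, norm_smul, Real.norm_eq_abs, abs_of_nonneg hσ, inner_sub_left,
    inner_sub_right, map_sub, real_inner_smul_right, real_inner_self_eq_norm_sq,
    real_inner_comm a a'] at hgap h₁ h₂ ⊢
  linarith [mul_nonneg hσ h₁, mul_nonneg hτ h₂]

lemma primalDualEnergy_succ_le (hτ : 0 ≤ τ) (hσ : 0 ≤ σ) (hK : τ * σ * ‖K‖ ^ 2 ≤ 1)
    {A₁ : Set (H₁ × H₁)} (hA₁ : IsMonotoneOp A₁) {A₂ : Set (H₂ × H₂)} (hA₂ : IsMonotoneOp A₂)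
    {J₁ : H₁ → H₁} (hJ₁ : ∀ w : H₁, (J₁ w, w - J₁ w) ∈ smulOp τ A₁)
    {J₂ : H₂ → H₂} (hJ₂ : ∀ w : H₂, (J₂ w, w - J₂ w) ∈ smulOp σ A₂)
    {u : H₁} {v : H₂} (hu : (u, -(ContinuousLinearMap.adjoint K v)) ∈ A₁) (hv : (v, K u) ∈ A₂)
    {u₀ u₁ : H₁} {v₀ v₁ : H₂}
    (hu₁ : u₁ = J₁ (u₀ - τ • ContinuousLinearMap.adjoint K v₀))
    (hv₁ : v₁ = J₂ (v₀ + σ • K u₁) + σ • (K u₁ - K u₀)) :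
    primalDualEnergy K τ σ (u₁ - u) (v₁ - v) ≤ primalDualEnergy K τ σ (u₀ - u) (v₀ - v) := by
  have h₁ := hA₁.smulOp hτ _ (hJ₁ (u₀ - τ • ContinuousLinearMap.adjoint K v₀)) _
    (mk_mem_smulOp hu τ)
  have h₂ := hA₂.smulOp hσ _ (hJ₂ (v₀ + σ • K u₁)) _ (mk_mem_smulOp hv σ)
  rw [← hu₁] at h₁
  have hv₁' : v₁ - v = (J₂ (v₀ + σ • K u₁) - v) + σ • K ((u₁ - u) - (u₀ - u)) := by
    rw [hv₁, sub_sub_sub_cancel_right, map_sub]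
    abel
  rw [hv₁']
  refine primalDualEnergy_le_of_inner_nonneg K hτ hσ hK (h₁.trans_eq ?_) (h₂.trans_eq ?_)
  · congr 1
    simp only [map_sub, smul_sub, smul_neg]
    abel
  · congr 1
    simp only [map_sub, smul_sub]
    abel

end PrimalDual

/-- Boundedness of the iterates of the new primal-dual algorithm
`u_{k+1} = J₁(u_k − τK*v_k)`, `v_{k+1} = J₂(v_k + σKu_{k+1}) + σ(Ku_{k+1} − Ku_k)`,
provided `τσ‖K‖² < 1` and a "saddle point" `(u,v)` exists. -/
theorem statement13
    {H₁ : Type*} [NormedAddCommGroup H₁] [InnerProductSpace ℝ H₁] [CompleteSpace H₁]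
    {H₂ : Type*} [NormedAddCommGroup H₂] [InnerProductSpace ℝ H₂] [CompleteSpace H₂]
    (K : H₁ →L[ℝ] H₂)
    (τ σ : ℝ) (hτ : 0 < τ) (hσ : 0 < σ) (hK : τ * σ * ‖K‖ ^ 2 < 1)
    (A₁ : Set (H₁ × H₁)) (hA₁ : IsMaximalMonotoneOp A₁)
    (A₂ : Set (H₂ × H₂)) (hA₂ : IsMaximalMonotoneOp A₂)
    (J₁ : H₁ → H₁) (hJ₁ : ∀ w : H₁, (J₁ w, w - J₁ w) ∈ smulOp τ A₁)
    (J₂ : H₂ → H₂) (hJ₂ : ∀ w : H₂, (J₂ w, w - J₂ w) ∈ smulOp σ A₂)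
    (hsaddle : ∃ (u : H₁) (v : H₂),
      (u, -(ContinuousLinearMap.adjoint K v)) ∈ A₁ ∧ (v, K u) ∈ A₂)
    (us : ℕ → H₁) (vs : ℕ → H₂)
    (hrecu : ∀ k : ℕ,
      us (k + 1) = J₁ (us k - τ • (ContinuousLinearMap.adjoint K (vs k))))
    (hrecv : ∀ k : ℕ,
      vs (k + 1) = J₂ (vs k + σ • K (us (k + 1))) + σ • (K (us (k + 1)) - K (us k))) :
    ∃ M : ℝ, 0 < M ∧ ∀ k : ℕ, ‖us k‖ ≤ M ∧ ‖vs k‖ ≤ M := by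
  obtain ⟨u, v, hu, hv⟩ := hsaddle
  have hE : Antitone fun k => primalDualEnergy K τ σ (us k - u) (vs k - v) :=
    antitone_nat_of_succ_le fun k => primalDualEnergy_succ_le K hτ.le hσ.le hK.le hA₁.1 hA₂.1
      hJ₁ hJ₂ hu hv (hrecu k) (hrecv k)
  obtain ⟨R, hR⟩ := exists_norm_le_of_primalDualEnergy_le K hτ hσ
    (primalDualEnergy K τ σ (us 0 - u) (vs 0 - v))
  have hbound (k : ℕ) := hR _ _ (hE k.zero_le)
  refine ⟨R + ‖u‖ + ‖v‖ + 1, ?_, fun k => ⟨?_, ?_⟩⟩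
  · linarith [(norm_nonneg _).trans (hbound 0).1, norm_nonneg u, norm_nonneg v]
  · linarith [norm_le_norm_add_norm_sub' (us k) u, (hbound k).1, norm_nonneg v]
  · linarith [norm_le_norm_add_norm_sub' (vs k) v, (hbound k).2, norm_nonneg u]
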